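/- Let k₀ be a field, let k be an extension field of k₀, and let Γ be a group. Let V be a representation of Γ on a finite-dimensional k₀-vector space. If the base change k ⊗_{k₀} V is semisimple as a k-representation of Γ (i.e., as a k[Γ]-module), then V is semisimple as a k₀-representation of Γ (i.e., as a k₀[Γ]-module). -/

import Mathlib

/-!
A `k₀[Γ]`-submodule `W ⊆ V` base-changes to a `k[Γ]`-submodule `k ⊗ W` of `k ⊗ V`, which by
semisimplicity is the image of a `Γ`-equivariant projection `π`. Since `k₀` is a field, there is a
`k₀`-linear functional `φ : k → k₀` with `φ 1 = 1`; then `v ↦ (φ ⊗ id) (π (1 ⊗ v))` is a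
`Γ`-equivariant projection of `V` onto `W`, and its kernel is a complement of `W`.
-/

open TensorProduct

/-- Base change of a representation along a ring extension `k₀ → k`,
i.e. the representation of `Γ` on `k ⊗[k₀] V`, with `Γ` acting through the second factor. -/
noncomputable def Representation.tensorUp
    (k₀ k : Type) [CommRing k₀] [CommRing k] [Algebra k₀ k]
    {Γ : Type} [Monoid Γ] {V : Type} [AddCommGroup V] [Module k₀ V]
    (ρ : Representation k₀ Γ V) : Representation k Γ (k ⊗[k₀] V) :=
  (Module.End.baseChangeHom k₀ k V).toRingHom.toMonoidHom.comp ρ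

/-- `ρ.asModule` is an additive group (it is a type synonym for `V`). -/
noncomputable instance Representation.asModuleAddCommGroup
    {k G V : Type} [CommSemiring k] [Monoid G] [AddCommGroup V] [Module k V]
    {ρ : Representation k G V} : AddCommGroup ρ.asModule :=
  inferInstanceAs <| AddCommGroup V

open scoped MonoidAlgebra

theorem isSemisimpleModule_iff_forall_exists_isProj {R M : Type*} [Ring R] [AddCommGroup M]
    [Module R M] :
    IsSemisimpleModule R M ↔ ∀ m : Submodule R M, ∃ f : M →ₗ[R] M, LinearMap.IsProj m f := by
  rw [isSemisimpleModule_iff, complementedLattice_iff]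
  refine forall_congr' fun m ↦ ⟨fun ⟨q, hq⟩ ↦ ?_, fun ⟨f, hf⟩ ↦ ⟨_, hf.isCompl⟩⟩
  exact ⟨m.projection q hq, Submodule.projection_apply_mem hq,
    fun _ ↦ Submodule.projection_apply_of_mem_left hq⟩

namespace Representation

variable {A G V : Type} [CommRing A] [Monoid G] [AddCommGroup V] [Module A V]

theorem isSemisimpleModule_asModule_iff_forall_exists_isProj (ρ : Representation A G V) :
    IsSemisimpleModule A[G] ρ.asModule ↔
      ∀ W : Subrepresentation ρ,
        ∃ p : ρ.IntertwiningMap ρ, LinearMap.IsProj W.toSubmodule p.toLinearMap := by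
  rw [isSemisimpleModule_iff_forall_exists_isProj,
    Subrepresentation.subrepresentationSubmoduleOrderIso.symm.forall_congr_left]
  refine forall_congr' fun W ↦
    (IntertwiningMap.equivLinearMapAsModule ρ ρ).symm.exists_congr_left.trans ?_
  -- the two sides are `IsProj` over `A[G]` and over `A`: different structures with equal fields
  exact exists_congr fun p ↦ ⟨fun ⟨h₁, h₂⟩ ↦ ⟨h₁, h₂⟩, fun ⟨h₁, h₂⟩ ↦ ⟨h₁, h₂⟩⟩

end Representation

namespace LinearMap

variable {k₀ k : Type*} [CommRing k₀] [CommRing k] [Algebra k₀ k] (φ : k →ₗ[k₀] k₀)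
  {U V : Type*} [AddCommGroup U] [Module k₀ U] [AddCommGroup V] [Module k₀ V]

variable (V) in
noncomputable def scalarRetraction : k ⊗[k₀] V →ₗ[k₀] V :=
  TensorProduct.lid k₀ V ∘ₗ φ.rTensor V

@[simp]
theorem scalarRetraction_tmul (c : k) (v : V) : φ.scalarRetraction V (c ⊗ₜ v) = φ c • v := by
  simp [scalarRetraction]

theorem scalarRetraction_baseChange (f : U →ₗ[k₀] V) (x : k ⊗[k₀] U) :
    φ.scalarRetraction V (f.baseChange k x) = f (φ.scalarRetraction U x) := by
  induction x using TensorProduct.induction_on with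
  | zero => simp
  | tmul c u => simp
  | add x y hx hy => simp only [map_add, hx, hy]

theorem scalarRetraction_mem_of_mem_baseChange {p : Submodule k₀ V} {x : k ⊗[k₀] V}
    (hx : x ∈ p.baseChange k) : φ.scalarRetraction V x ∈ p := by
  obtain ⟨y, rfl⟩ := hx
  rw [scalarRetraction_baseChange]
  exact Submodule.coe_mem _

end LinearMap

theorem Representation.tensorUp_apply {k₀ k Γ V : Type} [CommRing k₀] [CommRing k] [Algebra k₀ k]
    [Monoid Γ] [AddCommGroup V] [Module k₀ V] (ρ : Representation k₀ Γ V) (g : Γ) :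
    ρ.tensorUp k₀ k g = (ρ g).baseChange k :=
  rfl

namespace Subrepresentation

variable {k₀ k Γ V : Type} [CommRing k₀] [CommRing k] [Algebra k₀ k] [Monoid Γ] [AddCommGroup V]
  [Module k₀ V] {ρ : Representation k₀ Γ V}

variable (k) in
def baseChange (W : Subrepresentation ρ) : Subrepresentation (ρ.tensorUp k₀ k) where
  toSubmodule := W.toSubmodule.baseChange k
  apply_mem_toSubmodule g := by
    rintro _ ⟨x, rfl⟩
    refine ⟨(W.toRepresentation g).baseChange k x, ?_⟩
    rw [ρ.tensorUp_apply, ← LinearMap.comp_apply, ← LinearMap.comp_apply,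
      ← LinearMap.baseChange_comp, ← LinearMap.baseChange_comp]
    rfl

theorem exists_isProj_of_baseChange {φ : k →ₗ[k₀] k₀} (hφ : φ 1 = 1)
    (W : Subrepresentation ρ) {π : (ρ.tensorUp k₀ k).IntertwiningMap (ρ.tensorUp k₀ k)}
    (hπ : LinearMap.IsProj (W.baseChange k).toSubmodule π.toLinearMap) :
    ∃ p : ρ.IntertwiningMap ρ, LinearMap.IsProj W.toSubmodule p.toLinearMap := by
  let p : V →ₗ[k₀] V :=
    φ.scalarRetraction V ∘ₗ π.toLinearMap.restrictScalars k₀ ∘ₗ TensorProduct.mk k₀ k V 1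
  refine ⟨p.intertwiningMap_of_isIntertwiningMap ρ ρ fun g v ↦ ?_, fun v ↦ ?_, fun w hw ↦ ?_⟩
  · change φ.scalarRetraction V (π (1 ⊗ₜ ρ g v)) = ρ g (φ.scalarRetraction V (π (1 ⊗ₜ v)))
    rw [← (ρ g).baseChange_tmul, ← ρ.tensorUp_apply, π.isIntertwining, ρ.tensorUp_apply,
      φ.scalarRetraction_baseChange]
  · exact φ.scalarRetraction_mem_of_mem_baseChange (hπ.map_mem _)
  · change φ.scalarRetraction V (π.toLinearMap (1 ⊗ₜ w)) = w
    rw [hπ.map_id _ (Submodule.tmul_mem_baseChange_of_mem 1 hw), φ.scalarRetraction_tmul, hφ,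
      one_smul]

end Subrepresentation

theorem statement_9_general (k₀ : Type) [Field k₀] (k : Type) [Field k] [Algebra k₀ k]
    (Γ : Type) [Group Γ]
    (V : Type) [AddCommGroup V] [Module k₀ V]
    (ρ : Representation k₀ Γ V)
    (h : IsSemisimpleModule (MonoidAlgebra k Γ) (ρ.tensorUp k₀ k).asModule) :
    IsSemisimpleModule (MonoidAlgebra k₀ Γ) ρ.asModule := by
  obtain ⟨φ, hφ⟩ := (Algebra.linearMap k₀ k).exists_leftInverse_of_injective
    (LinearMap.ker_eq_bot.2 (algebraMap k₀ k).injective)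
  rw [Representation.isSemisimpleModule_asModule_iff_forall_exists_isProj] at h ⊢
  intro W
  obtain ⟨π, hπ⟩ := h (W.baseChange k)
  exact W.exists_isProj_of_baseChange (by simpa using LinearMap.congr_fun hφ 1) hπ

/-- if the base change `k ⊗[k₀] V` of a finite-dimensional `k₀`-representation `V`
of `Γ` is semisimple as a `k[Γ]`-module, then `V` is semisimple as a `k₀[Γ]`-module. -/
theorem statement_9 (k₀ : Type) [Field k₀] (k : Type) [Field k] [Algebra k₀ k]
    (Γ : Type) [Group Γ]
    (V : Type) [AddCommGroup V] [Module k₀ V] [FiniteDimensional k₀ V]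
    (ρ : Representation k₀ Γ V)
    (h : IsSemisimpleModule (MonoidAlgebra k Γ) (ρ.tensorUp k₀ k).asModule) :
    IsSemisimpleModule (MonoidAlgebra k₀ Γ) ρ.asModule :=
  statement_9_general k₀ k Γ V ρ h
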